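/- If x is in the Mañé set of f and y is in the Mañé set of g, then (x,y) is in the Mañé set of f×g. -/

import Mathlib

open Topology

/-- `p` is strong chain recurrent for `h` with respect to the distance function `d`. -/
def StrongChainRecPt {Z : Type*} (d : Z → Z → ℝ) (h : Z → Z) (p : Z) : Prop :=
  ∀ ε > (0 : ℝ), ∃ n : ℕ, 1 ≤ n ∧ ∃ u : ℕ → Z, u 0 = p ∧ u n = p ∧
    (∑ i ∈ Finset.range n, d (h (u i)) (u (i + 1))) ≤ ε

/-- `z` is in the generalized recurrent set of `h`: it is strong chain recurrent for
every metric compatible with the topology. -/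
def GRPt {Z : Type*} [t : TopologicalSpace Z] (h : Z → Z) (z : Z) : Prop :=
  ∀ m : MetricSpace Z, m.toUniformSpace.toTopologicalSpace = t →
    StrongChainRecPt m.dist h z

/-- `z` is in the Mañé set of `h`: it is strong chain recurrent for
some metric compatible with the topology. -/
def ManePt {Z : Type*} [t : TopologicalSpace Z] (h : Z → Z) (z : Z) : Prop :=
  ∃ m : MetricSpace Z, m.toUniformSpace.toTopologicalSpace = t ∧
    StrongChainRecPt m.dist h z

namespace ManeProdAux

open Finset

/-- Bundled data of a family of strong chains through a point, with the cost of the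
`k`-th chain at most `(1/2)^k`. -/
structure ChainPack (X : Type*) where
  met : MetricSpace X
  F : X → X
  base : X
  c : ℕ → ℕ → X
  len : ℕ → ℕ
  len_pos : ∀ k, 0 < len k
  c_zero : ∀ k, c k 0 = base
  c_len : ∀ k, c k (len k) = base
  cost : ∀ k, (∑ i ∈ Finset.range (len k), met.dist (F (c k i)) (c k (i + 1))) ≤ (1/2 : ℝ)^k

variable {X Y : Type*}

/-! ### Generic small lemmas -/

lemma geo_partial (m : ℕ) : (∑ i ∈ Finset.range m, ((1:ℝ)/2)^i) = 2 - 2*(1/2)^m := by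
  induction m with
  | zero => simp
  | succ m ih => rw [Finset.sum_range_succ, ih]; ring

lemma geo_le_two (m : ℕ) : (∑ i ∈ Finset.range m, ((1:ℝ)/2)^i) ≤ 2 := by
  rw [geo_partial]; have : (0:ℝ) ≤ 2*(1/2)^m := by positivity
  linarith

lemma geo_shift (m a : ℕ) :
    (∑ i ∈ Finset.range m, ((1:ℝ)/2)^(i+a)) ≤ 2 * (1/2)^a := by
  have : (∑ i ∈ Finset.range m, ((1:ℝ)/2)^(i+a))
      = (∑ i ∈ Finset.range m, ((1:ℝ)/2)^i) * (1/2)^a := by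
    rw [Finset.sum_mul]; exact Finset.sum_congr rfl fun i _ => (pow_add _ i a)
  rw [this]
  have h2 := geo_le_two m
  have : (0:ℝ) ≤ (1/2)^a := by positivity
  nlinarith

/-- sum of distinct powers of `1/2` with exponents `> K` is at most `(1/2)^K`. -/
lemma sum_pow_tail {S : Finset ℕ} {K : ℕ} (h : ∀ k ∈ S, K < k) :
    (∑ k ∈ S, ((1:ℝ)/2)^k) ≤ (1/2)^K := by
  rcases S.eq_empty_or_nonempty with rfl | hS
  · simp
  · have hsub : S ⊆ Finset.Ico (K+1) (S.max' hS + 1) := by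
      intro k hk
      simp only [Finset.mem_Ico]
      exact ⟨h k hk, Nat.lt_succ_of_le (S.le_max' k hk)⟩
    calc (∑ k ∈ S, ((1:ℝ)/2)^k)
        ≤ ∑ k ∈ Finset.Ico (K+1) (S.max' hS + 1), ((1:ℝ)/2)^k := by
          apply Finset.sum_le_sum_of_subset_of_nonneg hsub
          intro i _ _; positivity
      _ = ∑ i ∈ Finset.range (S.max' hS + 1 - (K+1)), ((1:ℝ)/2)^(K+1+i) := by
          rw [Finset.sum_Ico_eq_sum_range]
      _ ≤ 2 * (1/2)^(K+1) := by
          have := geo_shift (S.max' hS + 1 - (K+1)) (K+1)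
          calc _ = ∑ i ∈ Finset.range (S.max' hS + 1 - (K+1)), ((1:ℝ)/2)^(i+(K+1)) := by
                exact Finset.sum_congr rfl fun i _ => by rw [Nat.add_comm]
            _ ≤ _ := this
      _ = (1/2)^K := by rw [pow_succ]; ring

/-- Regroup a sum over a finite set of (level, index) labels by level. -/
lemma sum_group {F : Finset (ℕ × ℕ)} {lenf : ℕ × ℕ → ℝ} (hlen : ∀ l, 0 ≤ lenf l)
    {nf : ℕ → ℕ} (hF : ∀ l ∈ F, l.2 < nf l.1) :
    (∑ l ∈ F, lenf l) ≤ ∑ k ∈ F.image Prod.fst, ∑ i ∈ Finset.range (nf k), lenf (k, i) := by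
  classical
  have hdisj : (↑(F.image Prod.fst) : Set ℕ).PairwiseDisjoint
      (fun k => (Finset.range (nf k)).map ⟨fun i => ((k, i) : ℕ × ℕ), by
        intro a b hab; simpa using hab⟩) := by
    intro k1 _ k2 _ hne
    simp only [Finset.disjoint_left]
    intro l hl1 hl2
    simp only [Finset.mem_map, Function.Embedding.coeFn_mk] at hl1 hl2
    obtain ⟨i1, _, rfl⟩ := hl1
    obtain ⟨i2, _, h2⟩ := hl2
    exact hne (congrArg Prod.fst h2.symm)
  have hsum : (∑ l ∈ (F.image Prod.fst).biUnion
      (fun k => (Finset.range (nf k)).map ⟨fun i => ((k, i) : ℕ × ℕ), by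
        intro a b hab; simpa using hab⟩), lenf l)
      = ∑ k ∈ F.image Prod.fst, ∑ i ∈ Finset.range (nf k), lenf (k, i) := by
    rw [Finset.sum_biUnion hdisj]
    refine Finset.sum_congr rfl fun k _ => ?_
    rw [Finset.sum_map]
    rfl
  rw [← hsum]
  apply Finset.sum_le_sum_of_subset_of_nonneg
  · intro l hl
    simp only [Finset.mem_biUnion, Finset.mem_image, Finset.mem_map,
      Function.Embedding.coeFn_mk]
    exact ⟨l.1, ⟨l, hl, rfl⟩, l.2, Finset.mem_range.2 (hF l hl), rfl⟩
  · intro l _ _; exact hlen l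

lemma sum_comp_le {n' n : ℕ} {σ : ℕ → ℕ} {cst : ℕ → ℝ}
    (hmap : ∀ s, s < n' → σ s < n)
    (hinj : ∀ s1, s1 < n' → ∀ s2, s2 < n' → σ s1 = σ s2 → s1 = s2)
    (hc : ∀ t, t < n → 0 ≤ cst t) :
    (∑ s ∈ Finset.range n', cst (σ s)) ≤ ∑ t ∈ Finset.range n, cst t := by
  classical
  have him : (∑ t ∈ (Finset.range n').image σ, cst t)
      = ∑ s ∈ Finset.range n', cst (σ s) :=
    Finset.sum_image (fun a ha b hb h =>
      hinj a (Finset.mem_range.1 ha) b (Finset.mem_range.1 hb) h)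
  rw [← him]
  apply Finset.sum_le_sum_of_subset_of_nonneg
  · intro t ht
    simp only [Finset.mem_image, Finset.mem_range] at ht ⊢
    obtain ⟨s, hs, rfl⟩ := ht
    exact hmap s hs
  · intro t ht _; exact hc t (Finset.mem_range.1 ht)

/-! ### The splice lemma -/

/-- The set of labels used by a walk. -/
def labelSet (n : ℕ) (lab : ℕ → Option (ℕ × ℕ)) : Finset (ℕ × ℕ) :=
  (Finset.range n).biUnion fun t => (lab t).toFinset

lemma mem_labelSet {n : ℕ} {lab : ℕ → Option (ℕ × ℕ)} {l : ℕ × ℕ} :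
    l ∈ labelSet n lab ↔ ∃ t, t < n ∧ lab t = some l := by
  simp [labelSet, Finset.mem_biUnion, Option.mem_toFinset, eq_comm, Option.mem_def]

/-- Splice lemma: along a walk whose moves are either genuine steps (with cost at least the
distance) or uses of finitely many labeled "shortcut" edges, the total displacement is bounded
by the total step cost plus twice the length of each *distinct* edge used. -/
lemma splice {A : Type*} (mA : MetricSpace A) (E : ℕ × ℕ → A × A) :
    ∀ n : ℕ, ∀ u : ℕ → A, ∀ cst : ℕ → ℝ, ∀ lab : ℕ → Option (ℕ × ℕ),
      (∀ t, t < n → 0 ≤ cst t) →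
      (∀ t, t < n → lab t = none → mA.dist (u t) (u (t+1)) ≤ cst t) →
      (∀ t, t < n → ∀ l, lab t = some l →
          (u t, u (t+1)) = E l ∨ (u (t+1), u t) = E l) →
      mA.dist (u 0) (u n) ≤ (∑ t ∈ Finset.range n, cst t) +
        ∑ l ∈ labelSet n lab, 2 * mA.dist (E l).1 (E l).2 := by
  intro n
  induction n using Nat.strong_induction_on with
  | _ n IH =>
  intro u cst lab hc h0 h1
  classical
  by_cases hdup : ∃ t1 t2 l, t1 < t2 ∧ t2 < n ∧ lab t1 = some l ∧ lab t2 = some l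
  · obtain ⟨t1, t2, l, h12, h2n, hl1, hl2⟩ := hdup
    have finish : ∀ n' : ℕ, n' < n → ∀ u' : ℕ → A, ∀ σ : ℕ → ℕ,
        (∀ s, s < n' → σ s < n) →
        (∀ s1, s1 < n' → ∀ s2, s2 < n' → σ s1 = σ s2 → s1 = s2) →
        (∀ s, s < n' → u' s = u (σ s) ∧ u' (s+1) = u (σ s + 1)) →
        u' 0 = u 0 → u' n' = u n →
        mA.dist (u 0) (u n) ≤ (∑ t ∈ Finset.range n, cst t) +
          ∑ l' ∈ labelSet n lab, 2 * mA.dist (E l').1 (E l').2 := by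
      intro n' hn' u' σ hmap hinj hpair h₀ hN
      have key := IH n' hn' u' (fun s => cst (σ s)) (fun s => lab (σ s))
        (fun s hs => hc (σ s) (hmap s hs))
        (fun s hs hnone => by
          rw [(hpair s hs).1, (hpair s hs).2]
          exact h0 (σ s) (hmap s hs) hnone)
        (fun s hs l' hsome => by
          rw [(hpair s hs).1, (hpair s hs).2]
          exact h1 (σ s) (hmap s hs) l' hsome)
      rw [← h₀, ← hN]
      refine key.trans (add_le_add ?_ ?_)
      · exact sum_comp_le hmap hinj hc
      · apply Finset.sum_le_sum_of_subset_of_nonneg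
        · intro l' hl'
          rw [mem_labelSet] at hl' ⊢
          obtain ⟨s, hs, hl'⟩ := hl'
          exact ⟨σ s, hmap s hs, hl'⟩
        · intro l' _ _
          have : 0 ≤ mA.dist (E l').1 (E l').2 := by
            letI := mA; exact dist_nonneg
          linarith
    have hm1 := h1 t1 (h12.trans h2n) l hl1
    have hm2 := h1 t2 h2n l hl2
    have hkey : (u t1 = u t2 ∧ u (t1+1) = u (t2+1)) ∨
        (u t1 = u (t2+1) ∧ u (t1+1) = u t2) := by
      rcases hm1 with hA | hA <;> rcases hm2 with hB | hB
      · have h := hA.trans hB.symm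
        exact Or.inl ⟨congrArg Prod.fst h, congrArg Prod.snd h⟩
      · have h := hA.trans hB.symm
        exact Or.inr ⟨congrArg Prod.fst h, congrArg Prod.snd h⟩
      · have h := hA.trans hB.symm
        exact Or.inr ⟨congrArg Prod.snd h, congrArg Prod.fst h⟩
      · have h := hA.trans hB.symm
        exact Or.inl ⟨congrArg Prod.snd h, congrArg Prod.fst h⟩
    rcases hkey with ⟨he1, _⟩ | ⟨he1, _⟩
    · -- identical moves: splice out the loop between them
      refine finish (n - (t2 - t1)) (by omega)
        (fun s => if s ≤ t1 then u s else u (s + (t2 - t1)))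
        (fun s => if s < t1 then s else if s = t1 then t2 else s + (t2 - t1))
        ?_ ?_ ?_ ?_ ?_
      · intro s hs; split_ifs <;> omega
      · intro s1 hs1 s2 hs2 h; split_ifs at h <;> omega
      · intro s hs
        rcases lt_trichotomy s t1 with h | h | h
        · constructor
          · rw [if_pos (le_of_lt h), if_pos h]
          · rw [if_pos (by omega : s + 1 ≤ t1), if_pos h]
        · subst h
          constructor
          · rw [if_pos (le_refl s), if_neg (lt_irrefl s), if_pos rfl]; exact he1
          · rw [if_neg (by omega : ¬ s + 1 ≤ s), if_neg (lt_irrefl s), if_pos rfl]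
            congr 1; omega
        · constructor
          · rw [if_neg (by omega : ¬ s ≤ t1), if_neg (by omega : ¬ s < t1),
              if_neg (by omega : ¬ s = t1)]
          · rw [if_neg (by omega : ¬ s + 1 ≤ t1), if_neg (by omega : ¬ s < t1),
              if_neg (by omega : ¬ s = t1)]
            congr 1; omega
      · rw [if_pos (Nat.zero_le t1)]
      · rw [if_neg (by omega : ¬ n - (t2 - t1) ≤ t1)]; congr 1; omega
    · -- opposite moves: splice out the whole cycle
      refine finish (n - (t2 + 1 - t1)) (by omega)
        (fun s => if s < t1 then u s else u (s + (t2 + 1 - t1)))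
        (fun s => if s < t1 then s else s + (t2 + 1 - t1))
        ?_ ?_ ?_ ?_ ?_
      · intro s hs; split_ifs <;> omega
      · intro s1 hs1 s2 hs2 h; split_ifs at h <;> omega
      · intro s hs
        rcases lt_trichotomy (s + 1) t1 with h | h | h
        · constructor
          · rw [if_pos (by omega : s < t1), if_pos (by omega : s < t1)]
          · rw [if_pos h, if_pos (by omega : s < t1)]
        · constructor
          · rw [if_pos (by omega : s < t1), if_pos (by omega : s < t1)]
          · rw [if_neg (by omega : ¬ s + 1 < t1), if_pos (by omega : s < t1)]
            have e : s + 1 + (t2 + 1 - t1) = t2 + 1 := by omega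
            rw [e, ← he1]
            congr 1; omega
        · constructor
          · rw [if_neg (by omega : ¬ s < t1), if_neg (by omega : ¬ s < t1)]
          · rw [if_neg (by omega : ¬ s + 1 < t1), if_neg (by omega : ¬ s < t1)]
            congr 1; omega
      · by_cases h0' : 0 < t1
        · rw [if_pos h0']
        · rw [if_neg h0']
          have e : 0 + (t2 + 1 - t1) = t2 + 1 := by omega
          rw [e, ← he1]
          congr 1; omega
      · rw [if_neg (by omega : ¬ n - (t2 + 1 - t1) < t1)]; congr 1; omega
  · -- no duplicate labels: direct triangle estimate
    letI := mA
    have hinj : ∀ t1, t1 < n → ∀ t2, t2 < n → ∀ l1 l2, lab t1 = some l1 →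
        lab t2 = some l2 → l1 = l2 → t1 = t2 := by
      intro t1 ht1 t2 ht2 l1 l2 hs1 hs2 hl
      by_contra hne
      rcases Nat.lt_or_ge t1 t2 with h | h
      · exact hdup ⟨t1, t2, l1, h, ht2, hs1, by rw [hs2, hl]⟩
      · have h' : t2 < t1 := by omega
        exact hdup ⟨t2, t1, l1, h', ht1, by rw [hs2, hl], hs1⟩
    have step1 : mA.dist (u 0) (u n) ≤ ∑ t ∈ Finset.range n, dist (u t) (u (t+1)) :=
      dist_le_range_sum_dist u n
    set FF : ℕ → ℝ := fun t => if lab t = none then cst t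
      else dist (E ((lab t).getD (0,0))).1 (E ((lab t).getD (0,0))).2 with hFF
    have hF1 : ∀ t, t < n → dist (u t) (u (t+1)) ≤ FF t := by
      intro t ht
      rcases hcase : lab t with _ | l
      · rw [hFF]; dsimp only; rw [if_pos hcase]
        exact h0 t ht hcase
      · rw [hFF]; dsimp only
        rw [hcase, if_neg (by simp : ¬ (some l = none))]
        simp only [Option.getD_some]
        rcases h1 t ht l hcase with h | h
        · rw [← h]
        · rw [← h]; exact le_of_eq (dist_comm _ _)
    have step2 : (∑ t ∈ Finset.range n, dist (u t) (u (t+1)))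
        ≤ ∑ t ∈ Finset.range n, FF t :=
      Finset.sum_le_sum fun t ht => hF1 t (Finset.mem_range.1 ht)
    have hsplit := Finset.sum_filter_add_sum_filter_not (Finset.range n)
        (fun t => (lab t).isSome = true) FF
    have hnonepart : (∑ t ∈ (Finset.range n).filter
        (fun t => ¬ (lab t).isSome = true), FF t) ≤ ∑ t ∈ Finset.range n, cst t := by
      have hval : ∀ t ∈ (Finset.range n).filter (fun t => ¬ (lab t).isSome = true),
          FF t = cst t := by
        intro t ht
        simp only [Finset.mem_filter, Finset.mem_range] at ht
        have hnone : lab t = none := Option.not_isSome_iff_eq_none.1 ht.2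
        rw [hFF]; dsimp only; rw [if_pos hnone]
      rw [Finset.sum_congr rfl hval]
      apply Finset.sum_le_sum_of_subset_of_nonneg (Finset.filter_subset _ _)
      intro t ht _; exact hc t (Finset.mem_range.1 ht)
    have hsomepart : (∑ t ∈ (Finset.range n).filter (fun t => (lab t).isSome = true), FF t)
        ≤ ∑ l' ∈ labelSet n lab, 2 * dist (E l').1 (E l').2 := by
      set J := (Finset.range n).filter (fun t => (lab t).isSome = true) with hJ
      set lfn : ℕ → ℕ × ℕ := fun t => (lab t).getD (0, 0) with hlfn
      have hJlab : ∀ t ∈ J, lab t = some (lfn t) := by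
        intro t ht
        simp only [hJ, Finset.mem_filter] at ht
        rcases hcase : lab t with _ | l'
        · rw [hcase] at ht; simp at ht
        · rw [hlfn]; dsimp only; rw [hcase]; rfl
      have hJn : ∀ t ∈ J, t < n := by
        intro t ht
        simp only [hJ, Finset.mem_filter, Finset.mem_range] at ht
        exact ht.1
      have hFval : ∀ t ∈ J, FF t = dist (E (lfn t)).1 (E (lfn t)).2 := by
        intro t ht
        have h := hJlab t ht
        rw [hFF]; dsimp only
        rw [h, if_neg (by simp : ¬ (some (lfn t) = none))]
        simp only [Option.getD_some]
      rw [Finset.sum_congr rfl hFval]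
      have hinj' : ∀ a ∈ J, ∀ b ∈ J, lfn a = lfn b → a = b := by
        intro a ha b hb h
        exact hinj a (hJn a ha) b (hJn b hb) (lfn a) (lfn b)
          (hJlab a ha) (hJlab b hb) h
      rw [← Finset.sum_image (g := lfn) (f := fun l' => dist (E l').1 (E l').2) hinj']
      calc (∑ l' ∈ J.image lfn, dist (E l').1 (E l').2)
          ≤ ∑ l' ∈ J.image lfn, 2 * dist (E l').1 (E l').2 := by
            apply Finset.sum_le_sum
            intro l' _
            have : 0 ≤ dist (E l').1 (E l').2 := dist_nonneg
            linarith
        _ ≤ ∑ l' ∈ labelSet n lab, 2 * dist (E l').1 (E l').2 := by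
            apply Finset.sum_le_sum_of_subset_of_nonneg
            · intro l' hl'
              simp only [Finset.mem_image] at hl'
              obtain ⟨t, ht, rfl⟩ := hl'
              rw [mem_labelSet]
              exact ⟨t, hJn t ht, hJlab t ht⟩
            · intro l' _ _
              have : 0 ≤ dist (E l').1 (E l').2 := dist_nonneg
              linarith
    have htot : (∑ t ∈ Finset.range n, FF t) ≤ (∑ t ∈ Finset.range n, cst t) +
        ∑ l' ∈ labelSet n lab, 2 * dist (E l').1 (E l').2 := by
      rw [← hsplit]
      linarith
    exact step1.trans (step2.trans htot)

/-! ### The shortcut metric on the product -/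

lemma mdist_nonneg {A : Type*} (m : MetricSpace A) (a b : A) : 0 ≤ m.dist a b := by
  letI := m; exact dist_nonneg

lemma mdist_comm {A : Type*} (m : MetricSpace A) (a b : A) : m.dist a b = m.dist b a := by
  letI := m; exact dist_comm a b

lemma mdist_pos {A : Type*} (m : MetricSpace A) {a b : A} (h : a ≠ b) : 0 < m.dist a b := by
  letI := m; exact dist_pos.2 h

section Construction

variable (CX : ChainPack X) (CY : ChainPack Y)

/-- length of the level-`k` product chain -/
def LL (k : ℕ) : ℕ := CX.len k * CY.len k

lemma LL_pos (k : ℕ) : 0 < LL CX CY k := Nat.mul_pos (CX.len_pos k) (CY.len_pos k)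

/-- the level-`k` product chain -/
def PP (k t : ℕ) : X × Y := (CX.c k (t % CX.len k), CY.c k (t % CY.len k))

/-- price of one level-`k` shortcut -/
noncomputable def gam (k : ℕ) : ℝ := (1/2)^k / (LL CX CY k : ℝ)

lemma gam_pos (k : ℕ) : 0 < gam CX CY k := by
  have h := LL_pos CX CY k
  have h' : (0:ℝ) < (LL CX CY k : ℝ) := by exact_mod_cast h
  unfold gam
  positivity

/-- the product map -/
def HH (p : X × Y) : X × Y := (CX.F p.1, CY.F p.2)

/-- the level-`k` shortcut pairs -/
def SP (k t : ℕ) : (X × Y) × (X × Y) := (HH CX CY (PP CX CY k t), PP CX CY k (t+1))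

/-- base product distance (sup metric) -/
noncomputable def Df (p q : X × Y) : ℝ :=
  max (CX.met.dist p.1 q.1) (CY.met.dist p.2 q.2)

lemma Df_nonneg (p q : X × Y) : 0 ≤ Df CX CY p q :=
  le_trans (mdist_nonneg CX.met p.1 q.1) (le_max_left _ _)

lemma Df_comm (p q : X × Y) : Df CX CY p q = Df CX CY q p := by
  unfold Df
  rw [mdist_comm CX.met, mdist_comm CY.met]

/-- `(p, q)` is a level-`k` shortcut pair. -/
def IsSC (k : ℕ) (p q : X × Y) : Prop :=
  ∃ t, t < LL CX CY k ∧ (SP CX CY k t = (p, q) ∨ SP CX CY k t = (q, p))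

lemma IsSC_comm {k : ℕ} {p q : X × Y} (h : IsSC CX CY k p q) : IsSC CX CY k q p := by
  obtain ⟨t, ht, h | h⟩ := h
  exacts [⟨t, ht, Or.inr h⟩, ⟨t, ht, Or.inl h⟩]

open Classical in
/-- one-step cost at level `k` -/
noncomputable def ckk (k : ℕ) (p q : X × Y) : ℝ :=
  if IsSC CX CY k p q then min (gam CX CY k) (Df CX CY p q) else Df CX CY p q

lemma ckk_nonneg (k : ℕ) (p q : X × Y) : 0 ≤ ckk CX CY k p q := by
  unfold ckk
  split_ifs with h
  · exact le_min (gam_pos CX CY k).le (Df_nonneg CX CY p q)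
  · exact Df_nonneg CX CY p q

lemma ckk_le_Df (k : ℕ) (p q : X × Y) : ckk CX CY k p q ≤ Df CX CY p q := by
  unfold ckk
  split_ifs with h
  · exact min_le_right _ _
  · exact le_refl _

lemma ckk_comm (k : ℕ) (p q : X × Y) : ckk CX CY k p q = ckk CX CY k q p := by
  unfold ckk
  by_cases h : IsSC CX CY k p q
  · rw [if_pos h, if_pos (IsSC_comm CX CY h), Df_comm]
  · rw [if_neg h, if_neg (fun h' => h (IsSC_comm CX CY h')), Df_comm]

/-- one-step cost -/
noncomputable def cc (p q : X × Y) : ℝ := ⨅ k : ℕ, ckk CX CY k p q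

lemma cc_bdd (p q : X × Y) : BddBelow (Set.range fun k => ckk CX CY k p q) := by
  refine ⟨0, ?_⟩
  rintro r ⟨k, rfl⟩
  exact ckk_nonneg CX CY k p q

lemma cc_nonneg (p q : X × Y) : 0 ≤ cc CX CY p q :=
  le_ciInf fun k => ckk_nonneg CX CY k p q

lemma cc_le_Df (p q : X × Y) : cc CX CY p q ≤ Df CX CY p q :=
  (ciInf_le (cc_bdd CX CY p q) 0).trans (ckk_le_Df CX CY 0 p q)

lemma cc_comm (p q : X × Y) : cc CX CY p q = cc CX CY q p :=
  iInf_congr fun k => ckk_comm CX CY k p q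

lemma cc_le_gam {k : ℕ} {p q : X × Y} (h : IsSC CX CY k p q) :
    cc CX CY p q ≤ gam CX CY k := by
  refine (ciInf_le (cc_bdd CX CY p q) k).trans ?_
  unfold ckk
  rw [if_pos h]
  exact min_le_left _ _

/-- cost of a walk -/
noncomputable def pcost (w : ℕ → X × Y) (n : ℕ) : ℝ :=
  ∑ t ∈ Finset.range n, cc CX CY (w t) (w (t+1))

/-- costs of walks from `p` to `q` -/
def pathSet (p q : X × Y) : Set ℝ :=
  {r | ∃ n : ℕ, ∃ w : ℕ → X × Y, w 0 = p ∧ w n = q ∧ r = pcost CX CY w n}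

lemma pathSet_nonempty (p q : X × Y) : (pathSet CX CY p q).Nonempty :=
  ⟨pcost CX CY (fun t => if t = 0 then p else q) 1,
    1, fun t => if t = 0 then p else q, by simp, by simp, rfl⟩

lemma pathSet_bddBelow (p q : X × Y) : BddBelow (pathSet CX CY p q) := by
  refine ⟨0, ?_⟩
  rintro r ⟨n, w, _, _, rfl⟩
  exact Finset.sum_nonneg fun t _ => cc_nonneg CX CY _ _

/-- the shortcut metric -/
noncomputable def dd (p q : X × Y) : ℝ := sInf (pathSet CX CY p q)

lemma dd_nonneg (p q : X × Y) : 0 ≤ dd CX CY p q := by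
  refine le_csInf (pathSet_nonempty CX CY p q) ?_
  rintro r ⟨n, w, _, _, rfl⟩
  exact Finset.sum_nonneg fun t _ => cc_nonneg CX CY _ _

lemma dd_le_cc (p q : X × Y) : dd CX CY p q ≤ cc CX CY p q := by
  refine csInf_le (pathSet_bddBelow CX CY p q) ?_
  refine ⟨1, fun t => if t = 0 then p else q, by simp, by simp, ?_⟩
  simp [pcost]

lemma dd_self (p : X × Y) : dd CX CY p p = 0 := by
  refine le_antisymm (csInf_le (pathSet_bddBelow CX CY p p) ?_) (dd_nonneg CX CY p p)
  exact ⟨0, fun _ => p, rfl, rfl, by simp [pcost]⟩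

lemma pathSet_symm (p q : X × Y) : pathSet CX CY p q ⊆ pathSet CX CY q p := by
  rintro r ⟨n, w, h0, hn, rfl⟩
  refine ⟨n, fun t => w (n - t), by simp [hn], by simp [h0], ?_⟩
  unfold pcost
  dsimp only
  symm
  rw [← Finset.sum_range_reflect (fun j => cc CX CY (w j) (w (j+1))) n]
  apply Finset.sum_congr rfl
  intro t ht
  rw [Finset.mem_range] at ht
  have e1 : n - (t+1) = n - 1 - t := by omega
  have e2 : n - t = n - 1 - t + 1 := by omega
  rw [e1, cc_comm CX CY, e2]

lemma dd_comm (p q : X × Y) : dd CX CY p q = dd CX CY q p := by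
  unfold dd
  rw [Set.Subset.antisymm (pathSet_symm CX CY p q) (pathSet_symm CX CY q p)]

lemma dd_triangle (p q r : X × Y) :
    dd CX CY p r ≤ dd CX CY p q + dd CX CY q r := by
  refine le_of_forall_pos_le_add fun ε hε => ?_
  have h1 : dd CX CY p q < dd CX CY p q + ε/2 := by linarith
  have h2 : dd CX CY q r < dd CX CY q r + ε/2 := by linarith
  obtain ⟨r1, hr1mem, hr1⟩ := exists_lt_of_csInf_lt (pathSet_nonempty CX CY p q) h1
  obtain ⟨r2, hr2mem, hr2⟩ := exists_lt_of_csInf_lt (pathSet_nonempty CX CY q r) h2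
  obtain ⟨n1, w1, h10, h1n, rfl⟩ := hr1mem
  obtain ⟨n2, w2, h20, h2n, rfl⟩ := hr2mem
  have hW1 : ∀ s, s ≤ n1 → (if s < n1 then w1 s else w2 (s - n1)) = w1 s := by
    intro s hsle
    by_cases hcs : s < n1
    · rw [if_pos hcs]
    · have hseq : s = n1 := by omega
      rw [if_neg hcs, hseq, Nat.sub_self, h20, ← h1n]
  have hW2 : ∀ j : ℕ, (if n1 + j < n1 then w1 (n1+j) else w2 (n1 + j - n1)) = w2 j := by
    intro j
    rw [if_neg (by omega), show n1 + j - n1 = j from by omega]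
  have hmem : pcost CX CY w1 n1 + pcost CX CY w2 n2 ∈ pathSet CX CY p r := by
    refine ⟨n1 + n2, fun t => if t < n1 then w1 t else w2 (t - n1), ?_, ?_, ?_⟩
    · dsimp only
      rw [hW1 0 (Nat.zero_le n1), h10]
    · dsimp only
      rw [hW2 n2, h2n]
    · unfold pcost
      dsimp only
      rw [Finset.sum_range_add]
      congr 1
      · refine Finset.sum_congr rfl fun t ht => ?_
        rw [Finset.mem_range] at ht
        rw [hW1 t ht.le, hW1 (t+1) (by omega)]
      · refine Finset.sum_congr rfl fun t _ => ?_
        rw [show n1 + t + 1 = n1 + (t+1) from by omega, hW2 t, hW2 (t+1)]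
  have := csInf_le (pathSet_bddBelow CX CY p r) hmem
  calc dd CX CY p r ≤ pcost CX CY w1 n1 + pcost CX CY w2 n2 := this
    _ ≤ dd CX CY p q + dd CX CY q r + ε := by linarith

/-- successor of a chain index modulo the length -/
lemma c_mod_succ {Z : Type*} (C : ChainPack Z) (k t : ℕ) :
    C.c k ((t+1) % C.len k) = C.c k (t % C.len k + 1) := by
  have hn := C.len_pos k
  by_cases h1 : C.len k = 1
  · have h0 : ∀ s : ℕ, s % C.len k = 0 := fun s => by rw [h1, Nat.mod_one]
    rw [h0, h0, C.c_zero]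
    have hc := C.c_len k
    rw [h1] at hc
    exact hc.symm
  · have h2 : (t+1) % C.len k = (t % C.len k + 1) % C.len k := by
      conv_lhs => rw [Nat.add_mod]
      rw [Nat.mod_eq_of_lt (show 1 < C.len k by omega)]
    by_cases h3 : t % C.len k + 1 = C.len k
    · rw [h2, h3, Nat.mod_self, C.c_zero, C.c_len]
    · have hlt : t % C.len k + 1 < C.len k := by
        have := Nat.mod_lt t hn
        omega
      rw [h2, Nat.mod_eq_of_lt hlt]

/-- Positivity of the shortcut metric. -/
lemma dd_eq_zero {p q : X × Y} (h : dd CX CY p q = 0) : p = q := by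
  classical
  by_contra hne
  -- the base distance is positive
  have hR : 0 < Df CX CY p q := by
    have hor : p.1 ≠ q.1 ∨ p.2 ≠ q.2 := by
      by_contra hcon
      push_neg at hcon
      exact hne (Prod.ext_iff.2 ⟨hcon.1, hcon.2⟩)
    rcases hor with h' | h'
    · exact lt_of_lt_of_le (mdist_pos CX.met h') (le_max_left _ _)
    · exact lt_of_lt_of_le (mdist_pos CY.met h') (le_max_right _ _)
  set R := Df CX CY p q with hRdef
  obtain ⟨K, hK⟩ := exists_pow_lt_of_lt_one (show (0:ℝ) < R/16 by linarith)
    (by norm_num : (1:ℝ)/2 < 1)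
  -- a positive price floor for low levels
  obtain ⟨k0, hk0mem, hk0⟩ := Finset.exists_min_image (Finset.range (K+1))
    (gam CX CY) ⟨0, by simp⟩
  set ρ := min (R/4) (gam CX CY k0 / 2) with hρdef
  have hρpos : 0 < ρ := lt_min (by linarith) (by linarith [gam_pos CX CY k0])
  have hρR : ρ ≤ R/4 := min_le_left _ _
  have hρgam : ∀ k ≤ K, 2*ρ ≤ gam CX CY k := by
    intro k hkK
    have h1 : gam CX CY k0 ≤ gam CX CY k :=
      hk0 k (Finset.mem_range.2 (by omega))
    have h2 : ρ ≤ gam CX CY k0 / 2 := min_le_right _ _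
    linarith
  -- extract a cheap walk
  have hlt : dd CX CY p q < ρ := by rw [h]; exact hρpos
  obtain ⟨rr, hrmem, hrρ⟩ := exists_lt_of_csInf_lt (pathSet_nonempty CX CY p q) hlt
  obtain ⟨nn, w, hw0, hwn, rfl⟩ := hrmem
  -- classification of the moves
  have hterm : ∀ t, t < nn → cc CX CY (w t) (w (t+1)) ≤ pcost CX CY w nn := by
    intro t ht
    unfold pcost
    exact Finset.single_le_sum (f := fun i => cc CX CY (w i) (w (i+1)))
      (fun i _ => cc_nonneg CX CY _ _) (Finset.mem_range.2 ht)
  have hclass : ∀ t, ∃ o : Option (ℕ × ℕ), t < nn →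
      ((o = none → Df CX CY (w t) (w (t+1)) ≤ cc CX CY (w t) (w (t+1)) + ρ*(1/2)^(t+4)) ∧
       (∀ k t0, o = some (k, t0) → K < k ∧ t0 < LL CX CY k ∧
         (SP CX CY k t0 = (w t, w (t+1)) ∨ SP CX CY k t0 = (w (t+1), w t)))) := by
    intro t
    by_cases ht : t < nn
    swap
    · exact ⟨none, fun hcon => absurd hcon ht⟩
    have hδ : 0 < ρ*(1/2)^(t+4) := by positivity
    have hlt2 : (⨅ k : ℕ, ckk CX CY k (w t) (w (t+1)))
        < cc CX CY (w t) (w (t+1)) + ρ*(1/2)^(t+4) := by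
      have : cc CX CY (w t) (w (t+1)) < cc CX CY (w t) (w (t+1)) + ρ*(1/2)^(t+4) := by
        linarith
      exact this
    obtain ⟨k, hk⟩ := exists_lt_of_ciInf_lt hlt2
    by_cases hsc : IsSC CX CY k (w t) (w (t+1))
    · unfold ckk at hk
      rw [if_pos hsc] at hk
      rcases min_lt_iff.1 hk with hg | hDf
      · -- a genuinely cheap shortcut: its level must be high
        have hgam2 : gam CX CY k < 2*ρ := by
          have h1 : cc CX CY (w t) (w (t+1)) ≤ pcost CX CY w nn := hterm t ht
          have h2 : (1/2:ℝ)^(t+4) ≤ 1 := by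
            apply pow_le_one₀ <;> norm_num
          nlinarith [hρpos.le]
        have hKk : K < k := by
          by_contra hcon
          push_neg at hcon
          have := hρgam k hcon
          linarith
        obtain ⟨t0, ht0, hsp⟩ := hsc
        refine ⟨some (k, t0), fun _ => ⟨fun hno => by simp at hno, ?_⟩⟩
        intro k' t0' hoeq
        have h' := Option.some.inj hoeq
        obtain ⟨rfl, rfl⟩ : k = k' ∧ t0 = t0' :=
          ⟨congrArg Prod.fst h', congrArg Prod.snd h'⟩
        exact ⟨hKk, ht0, hsp⟩
      · exact ⟨none, fun _ => ⟨fun _ => hDf.le, fun k' t0' h' => by simp at h'⟩⟩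
    · unfold ckk at hk
      rw [if_neg hsc] at hk
      exact ⟨none, fun _ => ⟨fun _ => hk.le, fun k' t0' h' => by simp at h'⟩⟩
  choose oo hoo using hclass
  -- the total step-cost budget
  have hsum1 : (∑ t ∈ Finset.range nn, (cc CX CY (w t) (w (t+1)) + ρ*(1/2)^(t+4)))
      ≤ ρ + ρ/8 := by
    rw [Finset.sum_add_distrib]
    have h2 : (∑ t ∈ Finset.range nn, ρ*(1/2)^(t+4)) ≤ ρ/8 := by
      rw [← Finset.mul_sum]
      have hg := geo_shift nn 4
      have h4 : ((1:ℝ)/2)^4 = 1/16 := by norm_num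
      rw [h4] at hg
      nlinarith [hρpos.le]
    have h1 : (∑ t ∈ Finset.range nn, cc CX CY (w t) (w (t+1))) ≤ ρ := le_of_lt hrρ
    linarith
  -- the X-coordinate estimate
  have hXsplice := splice CX.met (fun l => (CX.F (CX.c l.1 l.2), CX.c l.1 (l.2 + 1))) nn
      (fun t => (w t).1)
      (fun t => cc CX CY (w t) (w (t+1)) + ρ*(1/2)^(t+4))
      (fun t => (oo t).map (fun z => (z.1, z.2 % CX.len z.1)))
      (fun t _ => by
        have := cc_nonneg CX CY (w t) (w (t+1))
        positivity)
      (fun t ht hno => by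
        have h' := ((hoo t ht).1) (Option.map_eq_none_iff.1 hno)
        unfold Df at h'
        exact le_trans (le_max_left _ _) h')
      (fun t ht l hsome => by
        obtain ⟨z, hz, hzl⟩ := Option.map_eq_some_iff.1 hsome
        obtain ⟨k, t0⟩ := z
        obtain ⟨hKk, ht0, hsp⟩ := ((hoo t ht).2) k t0 hz
        subst hzl
        dsimp only
        rcases hsp with hsp | hsp
        · have e1 : w t = HH CX CY (PP CX CY k t0) := (congrArg Prod.fst hsp).symm
          have e2 : w (t+1) = PP CX CY k (t0+1) := (congrArg Prod.snd hsp).symm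
          refine Or.inl (Prod.ext_iff.2 ⟨?_, ?_⟩)
          · show (w t).1 = CX.F (CX.c k (t0 % CX.len k))
            rw [e1]; rfl
          · show (w (t+1)).1 = CX.c k (t0 % CX.len k + 1)
            rw [e2]; exact c_mod_succ CX k t0
        · have e1 : w (t+1) = HH CX CY (PP CX CY k t0) := (congrArg Prod.fst hsp).symm
          have e2 : w t = PP CX CY k (t0+1) := (congrArg Prod.snd hsp).symm
          refine Or.inr (Prod.ext_iff.2 ⟨?_, ?_⟩)
          · show (w (t+1)).1 = CX.F (CX.c k (t0 % CX.len k))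
            rw [e1]; rfl
          · show (w t).1 = CX.c k (t0 % CX.len k + 1)
            rw [e2]; exact c_mod_succ CX k t0)
  have hXlab : (∑ l ∈ labelSet nn (fun t => (oo t).map (fun z => (z.1, z.2 % CX.len z.1))),
      2 * CX.met.dist (CX.F (CX.c l.1 l.2)) (CX.c l.1 (l.2+1))) ≤ 2 * (1/2)^K := by
    have hmem : ∀ l ∈ labelSet nn (fun t => (oo t).map (fun z => (z.1, z.2 % CX.len z.1))),
        K < l.1 ∧ l.2 < CX.len l.1 := by
      intro l hl
      rw [mem_labelSet] at hl
      obtain ⟨t, ht, hlab⟩ := hl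
      obtain ⟨z, hz, hzl⟩ := Option.map_eq_some_iff.1 hlab
      obtain ⟨k, t0⟩ := z
      obtain ⟨hKk, _, _⟩ := ((hoo t ht).2) k t0 hz
      subst hzl
      exact ⟨hKk, Nat.mod_lt t0 (CX.len_pos k)⟩
    rw [← Finset.mul_sum]
    have hgroup := sum_group
      (F := labelSet nn (fun t => (oo t).map (fun z => (z.1, z.2 % CX.len z.1))))
      (lenf := fun l => CX.met.dist (CX.F (CX.c l.1 l.2)) (CX.c l.1 (l.2+1)))
      (fun l => mdist_nonneg CX.met _ _) (nf := CX.len)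
      (fun l hl => (hmem l hl).2)
    have htail : (∑ k ∈ (labelSet nn (fun t => (oo t).map
          (fun z => (z.1, z.2 % CX.len z.1)))).image Prod.fst,
        ∑ i ∈ Finset.range (CX.len k),
          (fun l : ℕ × ℕ => CX.met.dist (CX.F (CX.c l.1 l.2)) (CX.c l.1 (l.2+1))) (k, i))
        ≤ ∑ k ∈ (labelSet nn (fun t => (oo t).map
          (fun z => (z.1, z.2 % CX.len z.1)))).image Prod.fst, ((1:ℝ)/2)^k := by
      refine Finset.sum_le_sum fun k _ => ?_
      simpa using CX.cost k
    have hpow := sum_pow_tail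
      (S := (labelSet nn (fun t => (oo t).map
        (fun z => (z.1, z.2 % CX.len z.1)))).image Prod.fst) (K := K)
      (by
        intro k hk
        obtain ⟨l, hl, rfl⟩ := Finset.mem_image.1 hk
        exact (hmem l hl).1)
    linarith
  -- the Y-coordinate estimate
  have hYsplice := splice CY.met (fun l => (CY.F (CY.c l.1 l.2), CY.c l.1 (l.2 + 1))) nn
      (fun t => (w t).2)
      (fun t => cc CX CY (w t) (w (t+1)) + ρ*(1/2)^(t+4))
      (fun t => (oo t).map (fun z => (z.1, z.2 % CY.len z.1)))
      (fun t _ => by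
        have := cc_nonneg CX CY (w t) (w (t+1))
        positivity)
      (fun t ht hno => by
        have h' := ((hoo t ht).1) (Option.map_eq_none_iff.1 hno)
        unfold Df at h'
        exact le_trans (le_max_right _ _) h')
      (fun t ht l hsome => by
        obtain ⟨z, hz, hzl⟩ := Option.map_eq_some_iff.1 hsome
        obtain ⟨k, t0⟩ := z
        obtain ⟨hKk, ht0, hsp⟩ := ((hoo t ht).2) k t0 hz
        subst hzl
        dsimp only
        rcases hsp with hsp | hsp
        · have e1 : w t = HH CX CY (PP CX CY k t0) := (congrArg Prod.fst hsp).symm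
          have e2 : w (t+1) = PP CX CY k (t0+1) := (congrArg Prod.snd hsp).symm
          refine Or.inl (Prod.ext_iff.2 ⟨?_, ?_⟩)
          · show (w t).2 = CY.F (CY.c k (t0 % CY.len k))
            rw [e1]; rfl
          · show (w (t+1)).2 = CY.c k (t0 % CY.len k + 1)
            rw [e2]; exact c_mod_succ CY k t0
        · have e1 : w (t+1) = HH CX CY (PP CX CY k t0) := (congrArg Prod.fst hsp).symm
          have e2 : w t = PP CX CY k (t0+1) := (congrArg Prod.snd hsp).symm
          refine Or.inr (Prod.ext_iff.2 ⟨?_, ?_⟩)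
          · show (w (t+1)).2 = CY.F (CY.c k (t0 % CY.len k))
            rw [e1]; rfl
          · show (w t).2 = CY.c k (t0 % CY.len k + 1)
            rw [e2]; exact c_mod_succ CY k t0)
  have hYlab : (∑ l ∈ labelSet nn (fun t => (oo t).map (fun z => (z.1, z.2 % CY.len z.1))),
      2 * CY.met.dist (CY.F (CY.c l.1 l.2)) (CY.c l.1 (l.2+1))) ≤ 2 * (1/2)^K := by
    have hmem : ∀ l ∈ labelSet nn (fun t => (oo t).map (fun z => (z.1, z.2 % CY.len z.1))),
        K < l.1 ∧ l.2 < CY.len l.1 := by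
      intro l hl
      rw [mem_labelSet] at hl
      obtain ⟨t, ht, hlab⟩ := hl
      obtain ⟨z, hz, hzl⟩ := Option.map_eq_some_iff.1 hlab
      obtain ⟨k, t0⟩ := z
      obtain ⟨hKk, _, _⟩ := ((hoo t ht).2) k t0 hz
      subst hzl
      exact ⟨hKk, Nat.mod_lt t0 (CY.len_pos k)⟩
    rw [← Finset.mul_sum]
    have hgroup := sum_group
      (F := labelSet nn (fun t => (oo t).map (fun z => (z.1, z.2 % CY.len z.1))))
      (lenf := fun l => CY.met.dist (CY.F (CY.c l.1 l.2)) (CY.c l.1 (l.2+1)))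
      (fun l => mdist_nonneg CY.met _ _) (nf := CY.len)
      (fun l hl => (hmem l hl).2)
    have htail : (∑ k ∈ (labelSet nn (fun t => (oo t).map
          (fun z => (z.1, z.2 % CY.len z.1)))).image Prod.fst,
        ∑ i ∈ Finset.range (CY.len k),
          (fun l : ℕ × ℕ => CY.met.dist (CY.F (CY.c l.1 l.2)) (CY.c l.1 (l.2+1))) (k, i))
        ≤ ∑ k ∈ (labelSet nn (fun t => (oo t).map
          (fun z => (z.1, z.2 % CY.len z.1)))).image Prod.fst, ((1:ℝ)/2)^k := by
      refine Finset.sum_le_sum fun k _ => ?_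
      simpa using CY.cost k
    have hpow := sum_pow_tail
      (S := (labelSet nn (fun t => (oo t).map
        (fun z => (z.1, z.2 % CY.len z.1)))).image Prod.fst) (K := K)
      (by
        intro k hk
        obtain ⟨l, hl, rfl⟩ := Finset.mem_image.1 hk
        exact (hmem l hl).1)
    linarith
  -- combine
  have hX2 : CX.met.dist p.1 q.1 ≤ (ρ + ρ/8) + 2*(1/2)^K := by
    have h0 : (fun t => (w t).1) 0 = p.1 := by dsimp only; rw [hw0]
    have hn : (fun t => (w t).1) nn = q.1 := by dsimp only; rw [hwn]
    rw [hw0, hwn] at hXsplice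
    exact hXsplice.trans (add_le_add hsum1 hXlab)
  have hY2 : CY.met.dist p.2 q.2 ≤ (ρ + ρ/8) + 2*(1/2)^K := by
    have h0 : (fun t => (w t).2) 0 = p.2 := by dsimp only; rw [hw0]
    have hn : (fun t => (w t).2) nn = q.2 := by dsimp only; rw [hwn]
    rw [hw0, hwn] at hYsplice
    exact hYsplice.trans (add_le_add hsum1 hYlab)
  have hfin : R ≤ (ρ + ρ/8) + 2*(1/2)^K := by
    rw [hRdef]
    exact max_le hX2 hY2
  linarith

/-- the shortcut pseudometric space -/
noncomputable def pms : PseudoMetricSpace (X × Y) where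
  dist := dd CX CY
  dist_self := dd_self CX CY
  dist_comm := dd_comm CX CY
  dist_triangle := dd_triangle CX CY

/-- the shortcut metric space -/
noncomputable def md : MetricSpace (X × Y) :=
  { pms CX CY with
    eq_of_dist_eq_zero := fun h => dd_eq_zero CX CY h }

lemma md_dist_eq : (md CX CY).dist = dd CX CY := rfl

/-- `(x, y)` is strong chain recurrent for the shortcut metric. -/
lemma md_chain : StrongChainRecPt (dd CX CY) (HH CX CY) (CX.base, CY.base) := by
  intro ε hε
  obtain ⟨k, hk⟩ := exists_pow_lt_of_lt_one hε (by norm_num : (1:ℝ)/2 < 1)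
  refine ⟨LL CX CY k, LL_pos CX CY k, PP CX CY k, ?_, ?_, ?_⟩
  · unfold PP
    rw [Nat.zero_mod, Nat.zero_mod, CX.c_zero, CY.c_zero]
  · show PP CX CY k (CX.len k * CY.len k) = _
    unfold PP
    rw [Nat.mul_mod_right, Nat.mul_mod_left, CX.c_zero, CY.c_zero]
  · have hterm : ∀ t ∈ Finset.range (LL CX CY k),
        dd CX CY (HH CX CY (PP CX CY k t)) (PP CX CY k (t+1)) ≤ gam CX CY k := by
      intro t ht
      rw [Finset.mem_range] at ht
      exact (dd_le_cc CX CY _ _).trans (cc_le_gam CX CY ⟨t, ht, Or.inl rfl⟩)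
    have hLne : ((LL CX CY k : ℝ)) ≠ 0 := by
      have := LL_pos CX CY k
      positivity
    calc (∑ t ∈ Finset.range (LL CX CY k),
          dd CX CY (HH CX CY (PP CX CY k t)) (PP CX CY k (t+1)))
        ≤ ∑ _t ∈ Finset.range (LL CX CY k), gam CX CY k := Finset.sum_le_sum hterm
      _ = (LL CX CY k : ℝ) * gam CX CY k := by
          rw [Finset.sum_const, Finset.card_range, nsmul_eq_mul]
      _ = (1/2)^k := by
          unfold gam
          field_simp
      _ ≤ ε := hk.le

end Construction

end ManeProdAux

/-- If `x` is in the Mañé set of `f` and `y` is in the Mañé set of `g`, then `(x, y)`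
is in the Mañé set of `f × g`. -/
theorem mane_prod {X Y : Type*} [TopologicalSpace X] [TopologicalSpace Y]
    [CompactSpace X] [CompactSpace Y]
    [TopologicalSpace.MetrizableSpace X] [TopologicalSpace.MetrizableSpace Y]
    (f : X → X) (g : Y → Y) (hf : Continuous f) (hg : Continuous g) (x : X) (y : Y)
    (hx : ManePt f x) (hy : ManePt g y) : ManePt (Prod.map f g) (x, y) := by
  classical
  obtain ⟨mX, hmX, hX⟩ := hx
  obtain ⟨mY, hmY, hY⟩ := hy
  subst hmX
  subst hmY
  have hXk : ∀ k : ℕ, ∃ n : ℕ, 1 ≤ n ∧ ∃ u : ℕ → X, u 0 = x ∧ u n = x ∧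
      (∑ i ∈ Finset.range n, mX.dist (f (u i)) (u (i + 1))) ≤ (1/2:ℝ)^k :=
    fun k => hX ((1/2)^k) (by positivity)
  have hYk : ∀ k : ℕ, ∃ n : ℕ, 1 ≤ n ∧ ∃ u : ℕ → Y, u 0 = y ∧ u n = y ∧
      (∑ i ∈ Finset.range n, mY.dist (g (u i)) (u (i + 1))) ≤ (1/2:ℝ)^k :=
    fun k => hY ((1/2)^k) (by positivity)
  choose nX hnX uX huX0 huXn huXc using hXk
  choose nY hnY uY huY0 huYn huYc using hYk
  let CX : ManeProdAux.ChainPack X := ⟨mX, f, x, uX, nX, hnX, huX0, huXn, huXc⟩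
  let CY : ManeProdAux.ChainPack Y := ⟨mY, g, y, uY, nY, hnY, huY0, huYn, huYc⟩
  refine ⟨ManeProdAux.md CX CY, ?_, ?_⟩
  · -- the shortcut metric induces the product topology
    have hopen : ∀ s : Set (X × Y),
        IsOpen[(ManeProdAux.md CX CY).toUniformSpace.toTopologicalSpace] s → IsOpen s := by
      intro s hs
      letI iX : MetricSpace X := mX
      letI iY : MetricSpace Y := mY
      rw [@Metric.isOpen_iff _ (ManeProdAux.md CX CY).toPseudoMetricSpace] at hs
      rw [isOpen_iff_forall_mem_open]
      intro p hp
      obtain ⟨ε, hε, hball⟩ := hs p hp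
      refine ⟨(Metric.ball p.1 ε) ×ˢ (Metric.ball p.2 ε), ?_, ?_, ?_⟩
      · intro z hz
        simp only [Set.mem_prod, Metric.mem_ball] at hz
        apply hball
        show ManeProdAux.dd CX CY z p < ε
        refine lt_of_le_of_lt ((ManeProdAux.dd_le_cc CX CY z p).trans
          (ManeProdAux.cc_le_Df CX CY z p)) ?_
        show max (mX.dist z.1 p.1) (mY.dist z.2 p.2) < ε
        exact max_lt hz.1 hz.2
      · exact (Metric.isOpen_ball).prod (Metric.isOpen_ball)
      · simp only [Set.mem_prod]
        exact ⟨Metric.mem_ball_self hε, Metric.mem_ball_self hε⟩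
    have hcont : Continuous[instTopologicalSpaceProd,
        (ManeProdAux.md CX CY).toUniformSpace.toTopologicalSpace] id := by
      rw [continuous_def]
      intro s hs
      simpa using hopen s hs
    haveI hT2 : @T2Space (X × Y) (ManeProdAux.md CX CY).toUniformSpace.toTopologicalSpace := by
      have key : ∀ {Z : Type _} (m : MetricSpace Z), @T2Space Z m.toUniformSpace.toTopologicalSpace :=
        fun m => by letI := m; infer_instance
      exact key (ManeProdAux.md CX CY)
    let h := @Continuous.homeoOfEquivCompactToT2 (X × Y) (X × Y) instTopologicalSpaceProd
      ((ManeProdAux.md CX CY).toUniformSpace.toTopologicalSpace) _ hT2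
      (Equiv.refl (X × Y)) (by simpa using hcont)
    have hcont2 : Continuous[(ManeProdAux.md CX CY).toUniformSpace.toTopologicalSpace,
        instTopologicalSpaceProd] id := by
      have := @Homeomorph.continuous_symm (X × Y) (X × Y) instTopologicalSpaceProd
        ((ManeProdAux.md CX CY).toUniformSpace.toTopologicalSpace) h
      exact this
    exact le_antisymm (continuous_id_iff_le.1 hcont2) (continuous_id_iff_le.1 hcont)
  · exact ManeProdAux.md_chain CX CY
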